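/- arXiv:0802.4008 — 3 statements merged into one kernel-verified Lean document; each statement's English description precedes it below -/
import Mathlib

section
/- Let $\ell_1, \dots, \ell_5$ be a pentagram of unit vectors in $\mathbb{R}^3$ (consecutive orthogonal, indices mod 5) with no two vectors parallel. Then the largest eigenvalue $\lambda_1$ of $A = \sum_i |\ell_i\rangle\langle\ell_i|$ satisfies $\lambda_1 > 2$. -/
/-!
Put `x = (ℓ 0 × ℓ 1) × (ℓ 2 × ℓ 3)`, which spans the line where the planes `⟨ℓ 0, ℓ 1⟩` and
`⟨ℓ 2, ℓ 3⟩` meet. Consecutive vectors are orthonormal, so the projections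
`ℓ 0 ℓ 0ᵀ + ℓ 1 ℓ 1ᵀ` and `ℓ 2 ℓ 2ᵀ + ℓ 3 ℓ 3ᵀ` both fix `x`; hence `A x = 2 x + ⟨ℓ 4, x⟩ ℓ 4` and
`⟨x, A x⟩ = 2 |x|² + ⟨ℓ 4, x⟩²`, which exceeds `2 |x|²` as soon as `⟨ℓ 4, x⟩ ≠ 0`.

To see `⟨ℓ 4, x⟩ ≠ 0`: in a pentagram without parallel vectors no `ℓ i` is orthogonal
to `ℓ (i + 2)` (otherwise `ℓ i, ℓ (i + 1), ℓ (i + 2)` is an orthonormal basis, and expanding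
`ℓ (i + 3) ⊥ ℓ (i + 4)` in it makes one of them parallel to a basis vector) and no three consecutive
vectors are coplanar. If `⟨ℓ 4, x⟩ = 0`, the first fact kills the `ℓ 1`- and `ℓ 2`-components
of `x`, so `x` is a multiple of `ℓ 0` and of `ℓ 3`, nonzero by the second fact.
-/

open Matrix

section Orthonormal

variable {R n : Type*} [CommRing R] [Fintype n] [DecidableEq n]

theorem eq_sum_dotProduct_smul_of_orthonormal (e : n → n → R)
    (he : ∀ i j, e i ⬝ᵥ e j = if i = j then 1 else 0) (u : n → R) :
    u = ∑ k, (e k ⬝ᵥ u) • e k := by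
  have hrows : of e * (of e)ᵀ = 1 := by
    ext i j
    simp [mul_apply, one_apply, ← he, dotProduct]
  have hcols : (of e)ᵀ * of e = 1 := mul_eq_one_comm.mp hrows
  calc u = ((of e)ᵀ * of e) *ᵥ u := by rw [hcols, one_mulVec]
    _ = ∑ k, (e k ⬝ᵥ u) • e k := by
      rw [← mulVec_mulVec, mulVec_transpose, vecMul_eq_sum]
      rfl

theorem dotProduct_eq_sum_of_orthonormal (e : n → n → R)
    (he : ∀ i j, e i ⬝ᵥ e j = if i = j then 1 else 0) (u v : n → R) :
    u ⬝ᵥ v = ∑ k, (e k ⬝ᵥ u) * (e k ⬝ᵥ v) := by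
  conv_lhs => rw [eq_sum_dotProduct_smul_of_orthonormal e he u]
  simp [sum_dotProduct, smul_dotProduct]

end Orthonormal

namespace Matrix.IsHermitian

variable {n : Type*} [Fintype n] [DecidableEq n] {A : Matrix n n ℝ}

theorem dotProduct_mulVec_le (hA : A.IsHermitian) {c : ℝ} (h : ∀ i, hA.eigenvalues i ≤ c)
    (x : n → ℝ) : x ⬝ᵥ A *ᵥ x ≤ c * (x ⬝ᵥ x) := by
  set e : n → n → ℝ := fun k => hA.eigenvectorBasis k
  have he : ∀ i j, e i ⬝ᵥ e j = if i = j then 1 else 0 := fun i j => by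
    simpa [EuclideanSpace.inner_eq_star_dotProduct, dotProduct_comm] using
      orthonormal_iff_ite.mp hA.eigenvectorBasis.orthonormal i j
  have hAe : ∀ k, e k ⬝ᵥ A *ᵥ x = hA.eigenvalues k * (e k ⬝ᵥ x) := fun k => by
    rw [dotProduct_mulVec, ← mulVec_transpose, ← conjTranspose_eq_transpose_of_trivial, hA.eq,
      hA.mulVec_eigenvectorBasis, smul_dotProduct, smul_eq_mul]
  rw [dotProduct_eq_sum_of_orthonormal e he, dotProduct_eq_sum_of_orthonormal e he,
    Finset.mul_sum]
  refine Finset.sum_le_sum fun k _ => ?_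
  rw [hAe, mul_left_comm]
  exact mul_le_mul_of_nonneg_right (h k) (mul_self_nonneg _)

theorem exists_mulVec_eq_smul_of_lt_dotProduct_mulVec (hA : A.IsHermitian) {c : ℝ} {x : n → ℝ}
    (hx : c * (x ⬝ᵥ x) < x ⬝ᵥ A *ᵥ x) : ∃ (μ : ℝ) (v : n → ℝ), c < μ ∧ v ≠ 0 ∧ A *ᵥ v = μ • v := by
  obtain ⟨i, hi⟩ : ∃ i, c < hA.eigenvalues i := by
    by_contra! h
    exact (hA.dotProduct_mulVec_le h x).not_gt hx
  exact ⟨_, _, hi, by simpa using hA.eigenvectorBasis.orthonormal.ne_zero i,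
    hA.mulVec_eigenvectorBasis i⟩

end Matrix.IsHermitian

theorem sum_vecMulVec_self_mulVec {R ι n : Type*} [CommRing R] [Fintype ι] [Fintype n]
    (v : ι → n → R) (x : n → R) :
    (∑ i, vecMulVec (v i) (v i)) *ᵥ x = ∑ i, (v i ⬝ᵥ x) • v i := by
  simp [sum_mulVec, vecMulVec_mulVec]

section CrossProduct

variable {R : Type*} [CommRing R]

theorem eq_add_add_of_orthonormal {a b c : Fin 3 → R} (ha : a ⬝ᵥ a = 1) (hb : b ⬝ᵥ b = 1)
    (hc : c ⬝ᵥ c = 1) (hab : a ⬝ᵥ b = 0) (hac : a ⬝ᵥ c = 0) (hbc : b ⬝ᵥ c = 0) (u : Fin 3 → R) :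
    u = (a ⬝ᵥ u) • a + (b ⬝ᵥ u) • b + (c ⬝ᵥ u) • c := by
  have he : ∀ i j, ![a, b, c] i ⬝ᵥ ![a, b, c] j = if i = j then 1 else 0 := by
    intro i j
    fin_cases i <;> fin_cases j <;> simp [ha, hb, hc, hab, hac, hbc, dotProduct_comm]
  simpa [Fin.sum_univ_three, add_assoc] using eq_sum_dotProduct_smul_of_orthonormal _ he u

theorem eq_smul_of_dotProduct_cross_eq_zero {a b c : Fin 3 → R} (hb : b ⬝ᵥ b = 1)
    (hc : c ⬝ᵥ c = 1) (hab : a ⬝ᵥ b = 0) (hbc : b ⬝ᵥ c = 0) (h : a ⬝ᵥ b ⨯₃ c = 0) :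
    a = (c ⬝ᵥ a) • c := by
  have hn : b ⨯₃ c ⬝ᵥ b ⨯₃ c = 1 := by
    rw [cross_dot_cross, hb, hc, hbc, dotProduct_comm c b, hbc]; ring
  have := eq_add_add_of_orthonormal hb hc hn hbc (dot_self_cross b c) (dot_cross_self b c) a
  rwa [dotProduct_comm b a, hab, dotProduct_comm (b ⨯₃ c) a, h, zero_smul, zero_smul, zero_add,
    add_zero] at this

theorem dotProduct_smul_add_dotProduct_smul_cross_cross {a b : Fin 3 → R} (ha : a ⬝ᵥ a = 1)
    (hb : b ⬝ᵥ b = 1) (hab : a ⬝ᵥ b = 0) (w : Fin 3 → R) :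
    (a ⬝ᵥ a ⨯₃ b ⨯₃ w) • a + (b ⬝ᵥ a ⨯₃ b ⨯₃ w) • b = a ⨯₃ b ⨯₃ w := by
  rw [cross_cross_eq_smul_sub_smul]
  simp only [dotProduct_sub, dotProduct_smul, smul_eq_mul, ha, hb, hab, dotProduct_comm b a,
    mul_zero, mul_one, zero_sub, sub_zero, neg_smul]
  module

end CrossProduct

structure IsPentagram {K : Type*} [Field K] (ℓ : Fin 5 → Fin 3 → K) : Prop where
  dotProduct_self : ∀ i, ℓ i ⬝ᵥ ℓ i = 1
  dotProduct_succ : ∀ i, ℓ i ⬝ᵥ ℓ (i + 1) = 0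
  ne_smul : ∀ i j, i ≠ j → ∀ c : K, ℓ i ≠ c • ℓ j

namespace IsPentagram

variable {K : Type*} [Field K] {ℓ : Fin 5 → Fin 3 → K}

theorem rotate (h : IsPentagram ℓ) (k : Fin 5) : IsPentagram fun i => ℓ (i + k) where
  dotProduct_self i := h.dotProduct_self _
  dotProduct_succ i := by simpa [add_right_comm] using h.dotProduct_succ (i + k)
  ne_smul i j hij := h.ne_smul _ _ (by simpa using hij)

theorem dotProduct_zero_two_ne_zero (h : IsPentagram ℓ) : ℓ 0 ⬝ᵥ ℓ 2 ≠ 0 := by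
  intro h02
  have h01 : ℓ 0 ⬝ᵥ ℓ 1 = 0 := h.dotProduct_succ 0
  have h12 : ℓ 1 ⬝ᵥ ℓ 2 = 0 := h.dotProduct_succ 1
  have h23 : ℓ 2 ⬝ᵥ ℓ 3 = 0 := h.dotProduct_succ 2
  have h34 : ℓ 3 ⬝ᵥ ℓ 4 = 0 := h.dotProduct_succ 3
  have h40 : ℓ 4 ⬝ᵥ ℓ 0 = 0 := h.dotProduct_succ 4
  have expand := eq_add_add_of_orthonormal (h.dotProduct_self 0) (h.dotProduct_self 1)
    (h.dotProduct_self 2) h01 h02 h12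
  have h3 : ℓ 3 = (ℓ 0 ⬝ᵥ ℓ 3) • ℓ 0 + (ℓ 1 ⬝ᵥ ℓ 3) • ℓ 1 := by
    simpa [h23] using expand (ℓ 3)
  have h4 : ℓ 4 = (ℓ 1 ⬝ᵥ ℓ 4) • ℓ 1 + (ℓ 2 ⬝ᵥ ℓ 4) • ℓ 2 := by
    simpa [dotProduct_comm (ℓ 0), h40] using expand (ℓ 4)
  have h1 : (ℓ 1 ⬝ᵥ ℓ 3) * (ℓ 1 ⬝ᵥ ℓ 4) = 0 := by
    simpa [h34, dotProduct_comm (ℓ 0), h40] using congrArg (· ⬝ᵥ ℓ 4) h3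
  rcases mul_eq_zero.mp h1 with h13 | h14
  · exact h.ne_smul 3 0 (by decide) _ (by simpa [h13] using h3)
  · exact h.ne_smul 4 2 (by decide) _ (by simpa [h14] using h4)

theorem dotProduct_add_two_ne_zero (h : IsPentagram ℓ) (i : Fin 5) : ℓ i ⬝ᵥ ℓ (i + 2) ≠ 0 := by
  simpa [add_comm] using (h.rotate i).dotProduct_zero_two_ne_zero

theorem dotProduct_cross_ne_zero (h : IsPentagram ℓ) (i : Fin 5) :
    ℓ i ⬝ᵥ ℓ (i + 1) ⨯₃ ℓ (i + 2) ≠ 0 := fun h0 =>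
  h.ne_smul i (i + 2) (by simp) _ <|
    eq_smul_of_dotProduct_cross_eq_zero (h.dotProduct_self _) (h.dotProduct_self _)
      (h.dotProduct_succ i)
      (by simpa [add_assoc, one_add_one_eq_two] using h.dotProduct_succ (i + 1)) h0

theorem sum_vecMulVec_mulVec_cross_cross (h : IsPentagram ℓ) :
    (∑ i, vecMulVec (ℓ i) (ℓ i)) *ᵥ (ℓ 0 ⨯₃ ℓ 1 ⨯₃ (ℓ 2 ⨯₃ ℓ 3)) =
      (2 : K) • (ℓ 0 ⨯₃ ℓ 1 ⨯₃ (ℓ 2 ⨯₃ ℓ 3)) +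
        (ℓ 4 ⬝ᵥ ℓ 0 ⨯₃ ℓ 1 ⨯₃ (ℓ 2 ⨯₃ ℓ 3)) • ℓ 4 := by
  set x := ℓ 0 ⨯₃ ℓ 1 ⨯₃ (ℓ 2 ⨯₃ ℓ 3)
  have hx₁ : (ℓ 0 ⬝ᵥ x) • ℓ 0 + (ℓ 1 ⬝ᵥ x) • ℓ 1 = x :=
    dotProduct_smul_add_dotProduct_smul_cross_cross (h.dotProduct_self 0) (h.dotProduct_self 1)
      (h.dotProduct_succ 0) _
  have hx₂ : (ℓ 2 ⬝ᵥ x) • ℓ 2 + (ℓ 3 ⬝ᵥ x) • ℓ 3 = x := by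
    rw [show x = -(ℓ 2 ⨯₃ ℓ 3 ⨯₃ (ℓ 0 ⨯₃ ℓ 1)) from (cross_anticomm _ _).symm, dotProduct_neg, dotProduct_neg, neg_smul, neg_smul, ← neg_add, neg_inj]
    exact dotProduct_smul_add_dotProduct_smul_cross_cross (h.dotProduct_self 2)
      (h.dotProduct_self 3) (h.dotProduct_succ 2) _
  rw [sum_vecMulVec_self_mulVec, Fin.sum_univ_five, add_assoc _ (_ • ℓ 2), hx₂, hx₁, two_smul]

theorem dotProduct_cross_cross_ne_zero (h : IsPentagram ℓ) :
    ℓ 4 ⬝ᵥ ℓ 0 ⨯₃ ℓ 1 ⨯₃ (ℓ 2 ⨯₃ ℓ 3) ≠ 0 := by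
  set m := ℓ 0 ⨯₃ ℓ 1
  set n := ℓ 2 ⨯₃ ℓ 3
  have hx₁ : m ⨯₃ n = (ℓ 0 ⬝ᵥ n) • ℓ 1 - (ℓ 1 ⬝ᵥ n) • ℓ 0 := cross_cross_eq_smul_sub_smul _ _ _
  have hx₂ : m ⨯₃ n = (m ⬝ᵥ ℓ 3) • ℓ 2 - (ℓ 2 ⬝ᵥ m) • ℓ 3 := cross_cross_eq_smul_sub_smul' _ _ _
  have h40 : ℓ 4 ⬝ᵥ ℓ 0 = 0 := h.dotProduct_succ 4
  have h43 : ℓ 4 ⬝ᵥ ℓ 3 = 0 := by rw [dotProduct_comm]; exact h.dotProduct_succ 3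
  have h41 : ℓ 4 ⬝ᵥ ℓ 1 ≠ 0 := h.dotProduct_add_two_ne_zero 4
  have h42 : ℓ 4 ⬝ᵥ ℓ 2 ≠ 0 := by rw [dotProduct_comm]; exact h.dotProduct_add_two_ne_zero 2
  have h1n : ℓ 1 ⬝ᵥ n ≠ 0 := h.dotProduct_cross_ne_zero 1
  intro h4
  have h0n : ℓ 0 ⬝ᵥ n = 0 := by
    rw [hx₁] at h4
    simpa [dotProduct_sub, dotProduct_smul, h40, h41] using h4
  have hm3 : m ⬝ᵥ ℓ 3 = 0 := by
    rw [hx₂] at h4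
    simpa [dotProduct_sub, dotProduct_smul, h43, h42] using h4
  rw [h0n, zero_smul, zero_sub] at hx₁
  rw [hm3, zero_smul, zero_sub, hx₁, neg_inj] at hx₂
  refine h.ne_smul 0 3 (by decide) ((ℓ 2 ⬝ᵥ m) / (ℓ 1 ⬝ᵥ n)) ?_
  rw [div_eq_inv_mul, mul_smul, ← hx₂, inv_smul_smul₀ h1n]

end IsPentagram

/-- For a pentagram with no two parallel vectors, the operator
`A = ∑ᵢ |ℓᵢ⟩⟨ℓᵢ|` has an eigenvalue strictly greater than 2 (so its largest
eigenvalue exceeds 2). -/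
theorem pentagram_top_eigenvalue_gt_two (ℓ : Fin 5 → Fin 3 → ℝ)
    (hunit : ∀ i, ∑ j, ℓ i j ^ 2 = 1)
    (horth : ∀ i : Fin 5, ∑ j, ℓ i j * ℓ (i + 1) j = 0)
    (hnpar : ∀ i j : Fin 5, i ≠ j → ∀ c : ℝ, ℓ i ≠ c • ℓ j) :
    ∃ (μ : ℝ) (v : Fin 3 → ℝ), 2 < μ ∧ v ≠ 0 ∧
      (∑ i, Matrix.of (fun a b => ℓ i a * ℓ i b)).mulVec v = μ • v := by
  have hℓ : IsPentagram ℓ := ⟨fun i => by simpa [dotProduct, sq] using hunit i, horth, hnpar⟩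
  set A : Matrix (Fin 3) (Fin 3) ℝ := ∑ i, vecMulVec (ℓ i) (ℓ i)
  have hA : A.IsHermitian := by
    ext a b
    simp [A, Matrix.sum_apply, vecMulVec_apply, mul_comm]
  set x := ℓ 0 ⨯₃ ℓ 1 ⨯₃ (ℓ 2 ⨯₃ ℓ 3)
  have hx : 2 * (x ⬝ᵥ x) < x ⬝ᵥ A *ᵥ x := by
    have h4 := hℓ.dotProduct_cross_cross_ne_zero
    rw [hℓ.sum_vecMulVec_mulVec_cross_cross, dotProduct_add, dotProduct_smul, dotProduct_smul,
      dotProduct_comm x (ℓ 4)]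
    simp only [smul_eq_mul]
    nlinarith [mul_self_pos.mpr h4]
  exact hA.exists_mulVec_eq_smul_of_lt_dotProduct_mulVec hx
end

section
/- Let $\ell_1, \dots, \ell_5$ be the regular pentagram in $\mathbb{R}^3$ (unit vectors with $\ell_i \perp \ell_{i+1}$ mod 5, arranged symmetrically around an axis) and let $\psi$ be the unit vector along the symmetry axis. Then $\sum_{i=1}^5 \langle \ell_i, \psi \rangle^2 = \frac{5 \cos(\pi/5)}{1 + \cos(\pi/5)}$, and this value exceeds $2$. -/
/-!
Every vector `(sin α cos θ, sin α sin θ, cos α)` on the cone of half-angle `α` is a unit vector,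
and two of them have inner product `sin²α cos(θ - θ') + cos²α`. Consecutive pentagram vectors
differ in azimuth by `4π/5` (modulo `2π`, also across the wrap-around `4 ↦ 0`), and
`cos(4π/5) = -cos(π/5)`; the choice `cos²α = c/(1+c)` with `c = cos(π/5)` is exactly what makes
`sin²α · (-c) + cos²α` vanish. Each vector contributes `cos²α` along the axis, and
`5c/(1+c) = √5 > 2` because `c = (1 + √5)/4`.
-/

open Real

noncomputable def coneVector (α θ : ℝ) : Fin 3 → ℝ :=
  ![sin α * cos θ, sin α * sin θ, cos α]

theorem sum_coneVector_sq (α θ : ℝ) : ∑ j, coneVector α θ j ^ 2 = 1 := by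
  simp only [coneVector, Fin.sum_univ_three, Matrix.cons_val_zero, Matrix.cons_val_one,
    Matrix.cons_val_two, Matrix.head_cons, Matrix.tail_cons]
  linear_combination sin α ^ 2 * sin_sq_add_cos_sq θ + sin_sq_add_cos_sq α

theorem coneVector_dotProduct (α a b : ℝ) :
    coneVector α a ⬝ᵥ coneVector α b = sin α ^ 2 * cos (a - b) + cos α ^ 2 := by
  simp only [dotProduct, coneVector, Fin.sum_univ_three, Matrix.cons_val_zero,
    Matrix.cons_val_one, Matrix.cons_val_two, Matrix.head_cons, Matrix.tail_cons, cos_sub]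
  ring

theorem coneVector_dotProduct_eq_zero {α a b c : ℝ} (hc : 1 + c ≠ 0)
    (hα : cos α ^ 2 = c / (1 + c)) (hab : cos (a - b) = -c) :
    coneVector α a ⬝ᵥ coneVector α b = 0 := by
  rw [coneVector_dotProduct, sin_sq, hα, hab]
  field_simp
  ring

theorem coneVector_dotProduct_axis (α θ : ℝ) : coneVector α θ ⬝ᵥ ![0, 0, 1] = cos α := by
  simp [dotProduct, coneVector, Fin.sum_univ_three]

/-- The wrap-around `n - 1 ↦ 0` in `Fin n` is harmless because `n β ∈ 2πℤ`. -/
theorem cos_mul_val_succ_sub_mul_val {n : ℕ} [NeZero n] {β : ℝ} {m : ℤ}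
    (hβ : n * β = m * (2 * π)) (i : Fin n) :
    cos (β * ((i + 1 : Fin n) : ℕ) - β * (i : ℕ)) = cos β := by
  set q := ((i : ℕ) + 1) / n
  have hwrap : (((i + 1 : Fin n) : ℕ) : ℝ) = (i : ℕ) + 1 - n * q := by
    rw [Fin.val_add, Fin.val_one', Nat.add_mod_mod, eq_sub_iff_add_eq]
    exact_mod_cast Nat.mod_add_div ((i : ℕ) + 1) n
  calc cos (β * ((i + 1 : Fin n) : ℕ) - β * (i : ℕ))
      = cos (β - ((q * m : ℤ) : ℝ) * (2 * π)) := by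
        rw [hwrap]
        push_cast
        congr 1
        linear_combination (-(q : ℝ)) * hβ
    _ = cos β := cos_sub_int_mul_two_pi β _

theorem cos_four_pi_div_five : cos (4 * π / 5) = -cos (π / 5) := by
  rw [← cos_pi_sub]
  ring_nf

theorem five_mul_cos_pi_div_five_div : 5 * cos (π / 5) / (1 + cos (π / 5)) = √5 := by
  have h5 : √5 ^ 2 = 5 := sq_sqrt (by norm_num)
  rw [cos_pi_div_five, div_eq_iff (by positivity)]
  linear_combination (-1 / 4 : ℝ) * h5

/-- The regular pentagram: five unit vectors at polar angle `α` with
`cos²α = cos(π/5)/(1+cos(π/5))`, at azimuthal angles `4πi/5`, so that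
consecutive vectors are orthogonal.  For the unit vector `ψ` along the symmetry
axis the Bell quantity `∑ᵢ ⟨ℓᵢ, ψ⟩²` equals `5cos(π/5)/(1+cos(π/5)) ≈ 2.236`,
violating the classical bound 2. -/
theorem regular_pentagram_violation
    (α : ℝ) (hα : 0 ≤ α ∧ α ≤ π / 2 ∧ cos α ^ 2 = cos (π / 5) / (1 + cos (π / 5)))
    (ℓ : Fin 5 → Fin 3 → ℝ)
    (hℓ : ∀ i : Fin 5, ℓ i = ![sin α * cos (4 * π * i / 5),
                               sin α * sin (4 * π * i / 5), cos α])
    (ψ : Fin 3 → ℝ) (hψ : ψ = ![0, 0, 1]) :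
    (∀ i, ∑ j, ℓ i j ^ 2 = 1) ∧
    (∀ i : Fin 5, ∑ j, ℓ i j * ℓ (i + 1) j = 0) ∧
    (∑ i : Fin 5, (∑ j, ℓ i j * ψ j) ^ 2 = 5 * cos (π / 5) / (1 + cos (π / 5))) ∧
    2 < 5 * cos (π / 5) / (1 + cos (π / 5)) := by
  obtain ⟨-, -, hcos⟩ := hα
  have hℓ' : ∀ i : Fin 5, ℓ i = coneVector α (4 * π / 5 * (i : ℕ)) := fun i => by
    rw [hℓ, coneVector, div_mul_eq_mul_div]
  have hc : 1 + cos (π / 5) ≠ 0 := by rw [cos_pi_div_five]; positivity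
  refine ⟨fun i => by rw [hℓ']; exact sum_coneVector_sq _ _, fun i => ?_, ?_, ?_⟩
  · have hstep :
        cos (4 * π / 5 * (i : ℕ) - 4 * π / 5 * ((i + 1 : Fin 5) : ℕ)) = -cos (π / 5) := by
      rw [← cos_neg, neg_sub, cos_mul_val_succ_sub_mul_val (m := 2) (by ring),
        cos_four_pi_div_five]
    rw [hℓ', hℓ']
    exact coneVector_dotProduct_eq_zero hc hcos hstep
  · calc ∑ i : Fin 5, (ℓ i ⬝ᵥ ψ) ^ 2 = ∑ _i : Fin 5, cos α ^ 2 := by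
          simp only [hℓ', hψ, coneVector_dotProduct_axis]
      _ = 5 * cos (π / 5) / (1 + cos (π / 5)) := by
          rw [Finset.sum_const, Finset.card_fin, nsmul_eq_mul, hcos]
          push_cast
          ring
  · rw [five_mul_cos_pi_div_five_div]
    exact (lt_sqrt zero_le_two).2 (by norm_num)
end

section
/- Every unit vector $\psi \in \mathbb{C}^3$ can be transformed by a rotation $g \in SO(3)$ (acting on $\mathbb{C}^3 = \mathbb{R}^3 \otimes \mathbb{C}$) and a phase factor into the canonical form $\psi = m \cos\varphi + i\, n \sin\varphi$, where $m, n \in \mathbb{R}^3$ are orthonormal vectors and $0 \leq \varphi \leq \pi/4$. -/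
/-!
Multiplying `ψ` by `e^{iθ}` multiplies `∑ ψ_j²` by `e^{2iθ}`, so a suitable phase makes this sum
real and nonnegative. Writing the rephased vector as `x + i y` with `x, y ∈ ℝ³`, that sum is
`‖x‖² - ‖y‖² + 2i⟪x, y⟫`, so `x ⟂ y` and `‖y‖ ≤ ‖x‖`, while `‖x‖² + ‖y‖² = 1`. Hence
`x = cos φ • m` and `y = sin φ • n` with `m, n` orthonormal and `0 ≤ φ ≤ π/4`; when `y = 0`,
`n` is any unit vector orthogonal to `m`. As `m` and `n` are not prescribed, the rotation can
be taken to be the identity.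
-/

open Real
open scoped RealInnerProductSpace

theorem Complex.exp_neg_arg_mul_I_mul (z : ℂ) : Complex.exp (-z.arg * Complex.I) * z = ‖z‖ := by
  conv_lhs => rw [← Complex.norm_mul_exp_arg_mul_I z]
  rw [mul_left_comm, ← Complex.exp_add]
  simp

theorem exists_phase_sum_sq_eq_norm {ι : Type*} [Fintype ι] (ψ : ι → ℂ) :
    ∃ θ : ℝ, ∑ j, (Complex.exp (Complex.I * θ) * ψ j) ^ 2 = ‖∑ j, ψ j ^ 2‖ := by
  refine ⟨-(∑ j, ψ j ^ 2).arg / 2, ?_⟩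
  rw [← Complex.exp_neg_arg_mul_I_mul, Finset.mul_sum]
  refine Finset.sum_congr rfl fun j _ => ?_
  rw [mul_pow, ← Complex.exp_nat_mul]
  push_cast
  ring_nf

theorem exists_angle_le_pi_div_four {a b : ℝ} (hb : 0 ≤ b) (hba : b ≤ a) (h : a ^ 2 + b ^ 2 = 1) :
    ∃ φ, 0 ≤ φ ∧ φ ≤ π / 4 ∧ cos φ = a ∧ sin φ = b := by
  have hb1 : b ≤ 1 := by nlinarith
  refine ⟨arcsin b, arcsin_nonneg.mpr hb, ?_, ?_, sin_arcsin (by linarith) hb1⟩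
  · rw [arcsin_le_iff_le_sin' ⟨by linarith [pi_pos], by linarith [pi_pos]⟩, sin_pi_div_four]
    nlinarith [sq_sqrt (show (0 : ℝ) ≤ 2 by norm_num), sqrt_nonneg 2]
  · rw [cos_arcsin, ← h, add_sub_cancel_right, sqrt_sq (hb.trans hba)]

section Orthogonal

variable {E : Type*} [NormedAddCommGroup E] [InnerProductSpace ℝ E] [FiniteDimensional ℝ E]

theorem exists_norm_eq_one_inner_eq_zero (hE : 2 ≤ Module.finrank ℝ E) (v : E) :
    ∃ u : E, ‖u‖ = 1 ∧ ⟪v, u⟫ = 0 := by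
  have hspan : Module.finrank ℝ (ℝ ∙ v) ≤ 1 := by
    simpa using finrank_span_le_card (R := ℝ) ({v} : Set E)
  have hK : (ℝ ∙ v)ᗮ ≠ ⊥ := by
    intro h
    have := (ℝ ∙ v).finrank_add_finrank_orthogonal
    rw [h, finrank_bot] at this
    omega
  obtain ⟨w, hw, hw0⟩ := Submodule.exists_mem_ne_zero_of_ne_bot hK
  refine ⟨‖w‖⁻¹ • w, norm_smul_inv_norm hw0, ?_⟩
  rw [inner_smul_right, Submodule.mem_orthogonal_singleton_iff_inner_right.mp hw, mul_zero]

theorem exists_norm_eq_one_inner_eq_zero_eq_norm_smul (hE : 2 ≤ Module.finrank ℝ E) {x y : E}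
    (h : ⟪x, y⟫ = 0) : ∃ n : E, ‖n‖ = 1 ∧ ⟪x, n⟫ = 0 ∧ y = ‖y‖ • n := by
  rcases eq_or_ne y 0 with rfl | hy
  · obtain ⟨n, hn, hxn⟩ := exists_norm_eq_one_inner_eq_zero hE x
    exact ⟨n, hn, hxn, by simp⟩
  · refine ⟨‖y‖⁻¹ • y, norm_smul_inv_norm hy, by rw [inner_smul_right, h, mul_zero], ?_⟩
    rw [smul_smul, mul_inv_cancel₀ (norm_ne_zero_iff.mpr hy), one_smul]

theorem exists_eq_cos_smul_eq_sin_smul (hE : 2 ≤ Module.finrank ℝ E) {x y : E}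
    (hxy : ‖x‖ ^ 2 + ‖y‖ ^ 2 = 1) (h : ⟪x, y⟫ = 0) (hle : ‖y‖ ≤ ‖x‖) :
    ∃ (φ : ℝ) (m n : E), 0 ≤ φ ∧ φ ≤ π / 4 ∧ ‖m‖ = 1 ∧ ‖n‖ = 1 ∧ ⟪m, n⟫ = 0 ∧
      x = cos φ • m ∧ y = sin φ • n := by
  obtain ⟨φ, hφ0, hφ, hcos, hsin⟩ := exists_angle_le_pi_div_four (norm_nonneg y) hle hxy
  have hx : x ≠ 0 := by
    rintro rfl
    simp only [norm_zero] at hle hxy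
    nlinarith [norm_nonneg y]
  obtain ⟨n, hn, hxn, hy⟩ := exists_norm_eq_one_inner_eq_zero_eq_norm_smul hE h
  refine ⟨φ, ‖x‖⁻¹ • x, n, hφ0, hφ, norm_smul_inv_norm hx, hn, ?_, ?_, by rwa [hsin]⟩
  · rw [inner_smul_left, hxn, mul_zero]
  · rw [hcos, smul_smul, mul_inv_cancel₀ (norm_ne_zero_iff.mpr hx), one_smul]

end Orthogonal

section ReIm

variable {ι : Type*}

noncomputable def reVec (χ : ι → ℂ) : EuclideanSpace ℝ ι := WithLp.toLp 2 fun j => (χ j).re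

noncomputable def imVec (χ : ι → ℂ) : EuclideanSpace ℝ ι := WithLp.toLp 2 fun j => (χ j).im

theorem reVec_add_imVec_mul_I (χ : ι → ℂ) (j : ι) :
    (reVec χ j : ℂ) + imVec χ j * Complex.I = χ j :=
  Complex.re_add_im (χ j)

variable [Fintype ι]

theorem norm_sq_reVec_add_norm_sq_imVec (χ : ι → ℂ) :
    ‖reVec χ‖ ^ 2 + ‖imVec χ‖ ^ 2 = ∑ j, ‖χ j‖ ^ 2 := by
  rw [EuclideanSpace.real_norm_sq_eq, EuclideanSpace.real_norm_sq_eq, ← Finset.sum_add_distrib]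
  refine Finset.sum_congr rfl fun j _ => ?_
  rw [Complex.sq_norm, Complex.normSq_apply]
  simp [reVec, imVec, sq]

theorem re_sum_sq (χ : ι → ℂ) : (∑ j, χ j ^ 2).re = ‖reVec χ‖ ^ 2 - ‖imVec χ‖ ^ 2 := by
  rw [EuclideanSpace.real_norm_sq_eq, EuclideanSpace.real_norm_sq_eq, Complex.re_sum,
    ← Finset.sum_sub_distrib]
  simp [reVec, imVec, sq]

theorem im_sum_sq (χ : ι → ℂ) : (∑ j, χ j ^ 2).im = 2 * ⟪reVec χ, imVec χ⟫ := by
  rw [EuclideanSpace.inner_eq_star_dotProduct, dotProduct, Complex.im_sum, Finset.mul_sum]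
  simp only [reVec, imVec, star_trivial, sq, Complex.mul_im]
  exact Finset.sum_congr rfl fun j _ => by ring

end ReIm

/-- Every unit spin-1 state `ψ ∈ ℂ³` can be brought by a rotation `g ∈ SO(3)`
and a phase factor to the canonical form `m cos φ + i n sin φ` with `m, n`
orthonormal real vectors and `0 ≤ φ ≤ π/4`. -/
theorem spin_one_canonical_form (ψ : Fin 3 → ℂ) (hψ : ∑ j, ‖ψ j‖ ^ 2 = 1) :
    ∃ (g : Matrix (Fin 3) (Fin 3) ℝ) (θ φ : ℝ) (m n : Fin 3 → ℝ),
      g ∈ Matrix.orthogonalGroup (Fin 3) ℝ ∧ g.det = 1 ∧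
      (∑ j, m j ^ 2 = 1) ∧ (∑ j, n j ^ 2 = 1) ∧ (∑ j, m j * n j = 0) ∧
      0 ≤ φ ∧ φ ≤ π / 4 ∧
      (∀ j, Complex.exp (Complex.I * θ) * (∑ k, (g j k : ℂ) * ψ k)
        = (m j : ℂ) * Real.cos φ + Complex.I * (n j : ℂ) * Real.sin φ) := by
  obtain ⟨θ, hθ⟩ := exists_phase_sum_sq_eq_norm ψ
  set χ : Fin 3 → ℂ := fun j => Complex.exp (Complex.I * θ) * ψ j
  have hnorm : ‖reVec χ‖ ^ 2 + ‖imVec χ‖ ^ 2 = 1 := by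
    rw [norm_sq_reVec_add_norm_sq_imVec, ← hψ]
    simp [χ, Complex.norm_exp]
  have hre := congrArg Complex.re hθ
  have him := congrArg Complex.im hθ
  rw [re_sum_sq, Complex.ofReal_re] at hre
  rw [im_sum_sq, Complex.ofReal_im] at him
  have hle : ‖imVec χ‖ ≤ ‖reVec χ‖ :=
    (pow_le_pow_iff_left₀ (norm_nonneg _) (norm_nonneg _) two_ne_zero).mp
      (by linarith [norm_nonneg (∑ j, ψ j ^ 2)])
  obtain ⟨φ, m, n, hφ0, hφ, hm, hn, hmn, hx, hy⟩ :=
    exists_eq_cos_smul_eq_sin_smul (by simp) hnorm (by linarith) hle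
  refine ⟨1, θ, φ, m, n, one_mem _, Matrix.det_one, ?_, ?_, ?_, hφ0, hφ, fun j => ?_⟩
  · rw [← EuclideanSpace.real_norm_sq_eq, hm, one_pow]
  · rw [← EuclideanSpace.real_norm_sq_eq, hn, one_pow]
  · simpa [EuclideanSpace.inner_eq_star_dotProduct, dotProduct, mul_comm] using hmn
  · have hg : ∑ k, ((1 : Matrix (Fin 3) (Fin 3) ℝ) j k : ℂ) * ψ k = ψ j := by
      simp [Matrix.one_apply, apply_ite Complex.ofReal]
    rw [hg]
    change χ j = _
    rw [← reVec_add_imVec_mul_I χ j, hx, hy]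
    simp only [PiLp.smul_apply, smul_eq_mul]
    push_cast
    ring
end
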